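/- Let u1, u2 : 2^E → ℝ be functions on the subsets of a finite set E such that u1 is ordinally w-concave and satisfies the unique-maximizer condition (UM), and u2 is ordinally w-concave. Then the lexicographic composition û = u1 ⋄ u2 is ordinally w-concave with respect to the lexicographic order on ℝ²: for every X, Y ⊆ E with X ≠ Y there exist distinct x ∈ (X \ Y) ∪ {∅} and y ∈ (Y \ X) ∪ {∅} such that (i) û(X) <_ℓ û(X−x+y), or (ii) û(Y) <_ℓ û(Y−y+x), or (iii) û(X) = û(X−x+y) and û(Y) = û(Y−y+x). -/
import Mathlib


namespace OrdConc

variable {E : Type*} [DecidableEq E]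

/-- Membership of an optional element in a finite set: the extra symbol `∅`
(encoded as `none`) always counts as a member of `S ∪ {∅}`. -/
def mem? (x : Option E) (S : Finset E) : Prop :=
  ∀ a : E, x = some a → a ∈ S

/-- `X − x` (no-op when `x = none`, i.e. the symbol `∅`). -/
def rem (X : Finset E) (x : Option E) : Finset E :=
  x.elim X fun a => X.erase a

/-- `X + x` (no-op when `x = none`, i.e. the symbol `∅`). -/
def add (X : Finset E) (x : Option E) : Finset E :=
  x.elim X fun a => insert a X

/-- `X − x + x'`. -/
def move (X : Finset E) (x x' : Option E) : Finset E :=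
  add (rem X x) x'

/-- Ordinal concavity (Definition 1). -/
def OrdinalConcave (u : Finset E → ℝ) : Prop :=
  ∀ X X' : Finset E, ∀ x ∈ X \ X', ∃ x' : Option E, mem? x' (X' \ X) ∧
    (u X < u (move X (some x) x') ∨
     u X' < u (move X' x' (some x)) ∨
     (u X = u (move X (some x) x') ∧ u X' = u (move X' x' (some x))))

/-- Ordinal weak-concavity (Definition 2). -/
def OrdinalWeakConcave (u : Finset E → ℝ) : Prop :=
  ∀ X X' : Finset E, X ≠ X' → ∃ x x' : Option E, x ≠ x' ∧
    mem? x (X \ X') ∧ mem? x' (X' \ X) ∧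
    (u X < u (move X x x') ∨
     u X' < u (move X' x' x) ∨
     (u X = u (move X x x') ∧ u X' = u (move X' x' x)))

/-- An M♮-convex set (family) of subsets of `E`. -/
def MnatConvex (F : Set (Finset E)) : Prop :=
  ∀ X ∈ F, ∀ X' ∈ F, ∀ x ∈ X \ X', ∃ x' : Option E, mem? x' (X' \ X) ∧
    move X (some x) x' ∈ F ∧ move X' x' (some x) ∈ F

/-- The simultaneous exchange property (†). -/
def Dagger (F : Set (Finset E)) : Prop :=
  ∀ X ∈ F, ∀ X' ∈ F, X ≠ X' → ∃ x x' : Option E, x ≠ x' ∧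
    mem? x (X \ X') ∧ mem? x' (X' \ X) ∧
    move X x x' ∈ F ∧ move X' x' x ∈ F

/-- `D*_u`, the family of global maximizers of `u`. -/
def Dstar (u : Finset E → ℝ) : Set (Finset E) :=
  {X | ∀ Z : Finset E, u Z ≤ u X}

/-- The neighborhood `N(X)`. -/
def Nbhd [Fintype E] (X : Finset E) : Set (Finset E) :=
  {Z | ∃ x x' : Option E, mem? x X ∧ mem? x' (Finset.univ \ X) ∧ Z = move X x x'}

/-- The interval `[X, Y]` in `2^E`. -/
def Interval (X Y : Finset E) : Set (Finset E) :=
  {Z | X ⊆ Z ∧ Z ⊆ Y}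

/-- `C_u(X,Y)`, the maximizers of `u` over the interval `[X,Y]`. -/
def CuI (u : Finset E → ℝ) (X Y : Finset E) : Set (Finset E) :=
  {Z | Z ∈ Interval X Y ∧ ∀ W ∈ Interval X Y, u W ≤ u Z}

/-- `C_u(X)`, the maximizers of `u` among all subsets of `X`. -/
def Cu (u : Finset E → ℝ) (X : Finset E) : Set (Finset E) :=
  {Z | Z ⊆ X ∧ ∀ W ⊆ X, u W ≤ u Z}

/-- Cardinality of the symmetric difference `X Δ Z`. -/
def sdCard (X Z : Finset E) : ℕ := (X \ Z ∪ Z \ X).card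

/-- The strict lexicographic order on `ℝ²`. -/
def lexLt (p q : ℝ × ℝ) : Prop := p.1 < q.1 ∨ (p.1 = q.1 ∧ p.2 < q.2)

/-- The (non-strict) lexicographic order on `ℝ²`. -/
def lexLe (p q : ℝ × ℝ) : Prop := lexLt p q ∨ p = q

-- AUX START
lemma lexLe_fst {p q : ℝ × ℝ} (h : lexLe p q) : p.1 ≤ q.1 := by
  rcases h with (h | h) | h
  · exact le_of_lt h
  · exact le_of_eq h.1
  · exact le_of_eq (by rw [h])

lemma subset_add {S T : Finset E} (y : Option E) (h : S ⊆ T) : S ⊆ add T y := by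
  cases y with
  | none => exact h
  | some b => exact h.trans (Finset.subset_insert _ _)

lemma subset_move {A X : Finset E} (hAX : A ⊆ X) (x y : Option E)
    (hx : ∀ a, x = some a → a ∉ A) : A ⊆ move X x y := by
  apply subset_add
  cases x with
  | none => exact hAX
  | some a =>
    intro c hc
    exact Finset.mem_erase.2 ⟨fun h => hx a rfl (h ▸ hc), hAX hc⟩

lemma move_subset {A X : Finset E} (hAX : A ⊆ X) (x y : Option E)
    (hy : ∀ b, y = some b → b ∈ X) : move A x y ⊆ X := by
  have hrem : rem A x ⊆ X := by
    cases x with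
    | none => exact hAX
    | some a => exact (Finset.erase_subset _ _).trans hAX
  cases y with
  | none => exact hrem
  | some b => exact Finset.insert_subset (hy b rfl) hrem

lemma move_ne {A : Finset E} {a b : Option E} (hab : a ≠ b)
    (ha : ∀ x, a = some x → x ∈ A) (hb : ∀ x, b = some x → x ∉ A) :
    move A a b ≠ A := by
  cases a with
  | none =>
    cases b with
    | none => exact absurd rfl hab
    | some b' =>
      have hb' := hb b' rfl
      intro h
      exact hb' (h ▸ Finset.mem_insert_self b' A)
  | some a' =>
    have ha' := ha a' rfl
    cases b with
    | none =>
      intro h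
      rw [← h] at ha'
      exact (Finset.notMem_erase a' A) ha'
    | some b' =>
      intro h
      have hab' : a' ≠ b' := fun he => hb b' rfl (he ▸ ha')
      have : a' ∈ insert b' (A.erase a') := by rw [show insert b' (A.erase a') = move A (some a') (some b') from rfl, h]; exact ha'
      rcases Finset.mem_insert.1 this with h' | h'
      · exact hab' h'
      · exact (Finset.notMem_erase a' A) h'

lemma move_sdiff {A : Finset E} (X : Finset E) (x y : Option E)
    (hy : ∀ b, y = some b → b ∉ A) : move X x y \ A = move (X \ A) x y := by
  cases x with
  | none =>
    cases y with
    | none => rfl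
    | some b =>
      have hb := hy b rfl
      show insert b X \ A = insert b (X \ A)
      ext c
      by_cases hc : c = b <;>
        simp [hc, hb, Finset.mem_sdiff, Finset.mem_insert]
  | some a =>
    cases y with
    | none =>
      show X.erase a \ A = (X \ A).erase a
      ext c
      simp [Finset.mem_sdiff, Finset.mem_erase]
      tauto
    | some b =>
      have hb := hy b rfl
      show insert b (X.erase a) \ A = insert b ((X \ A).erase a)
      ext c
      by_cases hc : c = b <;>
        simp [hc, hb, Finset.mem_sdiff, Finset.mem_insert, Finset.mem_erase] <;> tauto

lemma insert_erase_sdiff {A X : Finset E} (a' b' : E) (ha : a' ∈ A) (hb : b' ∉ X) :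
    insert b' (X.erase a') \ insert b' (A.erase a') = X \ A := by
  ext c
  by_cases hcb : c = b'
  · subst hcb
    simp [hb]
  · by_cases hca : c = a'
    · subst hca
      simp [ha, hcb]
    · simp [hcb, hca, Finset.mem_sdiff, Finset.mem_insert, Finset.mem_erase]

lemma uhat_val {u1 u2 : Finset E → ℝ} {uhat : Finset E → ℝ × ℝ}
    (huhat : ∀ X : Finset E,
      (∃ X1 ⊆ X, uhat X = (u1 X1, u2 (X \ X1))) ∧
      (∀ X1 ⊆ X, lexLe (u1 X1, u2 (X \ X1)) (uhat X)))
    {X A : Finset E} (hA : A ∈ Cu u1 X)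
    (huniq : ∀ W ∈ Cu u1 X, W = A) :
    uhat X = (u1 A, u2 (X \ A)) := by
  obtain ⟨hAX, hAmax⟩ := hA
  obtain ⟨⟨Z, hZ, hval⟩, hmax⟩ := huhat X
  rcases hmax A hAX with hlt | heq
  · exfalso
    rw [hval] at hlt
    rcases hlt with h | ⟨h, h'⟩
    · exact absurd (hAmax Z hZ) (not_le.2 h)
    · have hZCu : Z ∈ Cu u1 X := ⟨hZ, fun W hW => (hAmax W hW).trans h.le⟩
      have : Z = A := huniq Z hZCu
      rw [this] at h'
      exact lt_irrefl _ h'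
  · exact heq.symm


theorem lex_composition_ordinallyWeakConcave
    {E : Type*} [DecidableEq E] [Fintype E]
    (u1 u2 : Finset E → ℝ)
    (h1 : OrdinalWeakConcave u1)
    (hUM : ∀ X : Finset E, ∃! Z : Finset E, Z ∈ Cu u1 X)
    (h2 : OrdinalWeakConcave u2)
    (uhat : Finset E → ℝ × ℝ)
    (huhat : ∀ X : Finset E,
      (∃ X1 ⊆ X, uhat X = (u1 X1, u2 (X \ X1))) ∧
      (∀ X1 ⊆ X, lexLe (u1 X1, u2 (X \ X1)) (uhat X))) :
    ∀ X Y : Finset E, X ≠ Y → ∃ x y : Option E, x ≠ y ∧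
      mem? x (X \ Y) ∧ mem? y (Y \ X) ∧
      (lexLt (uhat X) (uhat (move X x y)) ∨
       lexLt (uhat Y) (uhat (move Y y x)) ∨
       (uhat X = uhat (move X x y) ∧ uhat Y = uhat (move Y y x))) := by
  intro X Y hXY
  obtain ⟨A, hACu, hAuniq⟩ := hUM X
  obtain ⟨B, hBCu, hBuniq⟩ := hUM Y
  obtain ⟨hAX, hAmax⟩ := hACu
  obtain ⟨hBY, hBmax⟩ := hBCu
  have hle1 : ∀ (Z W : Finset E), W ⊆ Z → u1 W ≤ (uhat Z).1 :=
    fun Z W hW => lexLe_fst ((huhat Z).2 W hW)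
  have hXval : uhat X = (u1 A, u2 (X \ A)) :=
    uhat_val huhat ⟨hAX, hAmax⟩ (fun W hW => hAuniq W hW)
  have hYval : uhat Y = (u1 B, u2 (Y \ B)) :=
    uhat_val huhat ⟨hBY, hBmax⟩ (fun W hW => hBuniq W hW)
  have key : ∀ (Z' A' : Finset E), A' ⊆ Z' → u1 A' = (uhat Z').1 →
      uhat Z' = (u1 A', u2 (Z' \ A')) := by
    intro Z' A' hsub heq
    have hCu : A' ∈ Cu u1 Z' := ⟨hsub, fun W hW => (hle1 Z' W hW).trans heq.ge⟩
    obtain ⟨C, hCCu, hCuniq⟩ := hUM Z'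
    exact uhat_val huhat hCu (fun W hW => by rw [hCuniq W hW, ← hCuniq A' hCu])
  by_cases hAB : A = B
  · -- Case 1 : same u1-maximizer
    rw [← hAB] at hBY hBmax hYval
    have hne2 : X \ A ≠ Y \ A := by
      intro h
      apply hXY
      rw [← Finset.sdiff_union_of_subset hAX, ← Finset.sdiff_union_of_subset hBY, h]
    obtain ⟨x, y, hxy, hx2, hy2, hdisj⟩ := h2 (X \ A) (Y \ A) hne2
    have hxmem : ∀ a, x = some a → (a ∈ X ∧ a ∉ A) ∧ ¬(a ∈ Y ∧ a ∉ A) := by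
      intro a ha
      simpa [Finset.mem_sdiff] using hx2 a ha
    have hymem : ∀ a, y = some a → (a ∈ Y ∧ a ∉ A) ∧ ¬(a ∈ X ∧ a ∉ A) := by
      intro a ha
      simpa [Finset.mem_sdiff] using hy2 a ha
    have hxXY : mem? x (X \ Y) := by
      intro a ha
      obtain ⟨⟨h1', h2'⟩, h3'⟩ := hxmem a ha
      exact Finset.mem_sdiff.2 ⟨h1', fun hY' => h3' ⟨hY', h2'⟩⟩
    have hyYX : mem? y (Y \ X) := by
      intro a ha
      obtain ⟨⟨h1', h2'⟩, h3'⟩ := hymem a ha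
      exact Finset.mem_sdiff.2 ⟨h1', fun hX' => h3' ⟨hX', h2'⟩⟩
    have hxA : ∀ a, x = some a → a ∉ A := fun a ha => ((hxmem a ha).1).2
    have hyA : ∀ a, y = some a → a ∉ A := fun a ha => ((hymem a ha).1).2
    have hAX' : A ⊆ move X x y := subset_move hAX x y hxA
    have hAY' : A ⊆ move Y y x := subset_move hBY y x hyA
    refine ⟨x, y, hxy, hxXY, hyYX, ?_⟩
    rcases lt_or_eq_of_le (hle1 _ _ hAX') with hlt | heq
    · exact Or.inl (by rw [hXval]; exact Or.inl hlt)
    · rcases lt_or_eq_of_le (hle1 _ _ hAY') with hltY | heqY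
      · exact Or.inr (Or.inl (by rw [hYval]; exact Or.inl hltY))
      · have hX' : uhat (move X x y) = (u1 A, u2 (move (X \ A) x y)) := by
          rw [key _ _ hAX' heq, move_sdiff X x y hyA]
        have hY' : uhat (move Y y x) = (u1 A, u2 (move (Y \ A) y x)) := by
          rw [key _ _ hAY' heqY, move_sdiff Y y x hxA]
        rcases hdisj with h | h | ⟨h, h'⟩
        · exact Or.inl (by rw [hXval, hX']; exact Or.inr ⟨rfl, h⟩)
        · exact Or.inr (Or.inl (by rw [hYval, hY']; exact Or.inr ⟨rfl, h⟩))
        · exact Or.inr (Or.inr ⟨by rw [hXval, hX', h], by rw [hYval, hY', h']⟩)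
  · -- Case 2 : distinct u1-maximizers
    obtain ⟨a, b, hab, haAB, hbBA, hdisj⟩ := h1 A B hAB
    have haA : ∀ x', a = some x' → x' ∈ A ∧ x' ∉ B := by
      intro x' hx'
      simpa [Finset.mem_sdiff] using haAB x' hx'
    have hbB : ∀ x', b = some x' → x' ∈ B ∧ x' ∉ A := by
      intro x' hx'
      simpa [Finset.mem_sdiff] using hbBA x' hx'
    have hnotinX : ¬ move A a b ⊆ X → ∃ b', b = some b' ∧ b' ∉ X := by
      intro hns
      cases b with
      | none => exact absurd (move_subset hAX a none (by intro c hc; cases hc)) hns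
      | some b' =>
        by_cases hb' : b' ∈ X
        · exact absurd (move_subset hAX a (some b')
            (by intro c hc; cases hc; exact hb')) hns
        · exact ⟨b', rfl, hb'⟩
    have hnotinY : ¬ move B b a ⊆ Y → ∃ a', a = some a' ∧ a' ∉ Y := by
      intro hns
      cases a with
      | none => exact absurd (move_subset hBY b none (by intro c hc; cases hc)) hns
      | some a' =>
        by_cases ha' : a' ∈ Y
        · exact absurd (move_subset hBY b (some a')
            (by intro c hc; cases hc; exact ha')) hns
        · exact ⟨a', rfl, ha'⟩
    rcases hdisj with hα | hβ | ⟨hA', hB'⟩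
    · -- u1 A < u1 (A − a + b)
      have hns : ¬ move A a b ⊆ X := fun hs => absurd (hAmax _ hs) (not_le.2 hα)
      obtain ⟨b', hb'eq, hb'X⟩ := hnotinX hns
      subst hb'eq
      have hb'Y : b' ∈ Y := hBY (hbB b' rfl).1
      refine ⟨none, some b', by simp, ?_, ?_, Or.inl ?_⟩
      · intro c hc; cases hc
      · intro c hc; cases hc; exact Finset.mem_sdiff.2 ⟨hb'Y, hb'X⟩
      · have hsub : move A a (some b') ⊆ move X none (some b') := by
          show move A a (some b') ⊆ insert b' X
          exact move_subset (hAX.trans (Finset.subset_insert _ _)) a (some b')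
            (by intro c hc; cases hc; exact Finset.mem_insert_self _ _)
        rw [hXval]
        exact Or.inl (lt_of_lt_of_le hα (hle1 _ _ hsub))
    · -- u1 B < u1 (B − b + a)
      have hns : ¬ move B b a ⊆ Y := fun hs => absurd (hBmax _ hs) (not_le.2 hβ)
      obtain ⟨a', ha'eq, ha'Y⟩ := hnotinY hns
      subst ha'eq
      have ha'X : a' ∈ X := hAX (haA a' rfl).1
      refine ⟨some a', none, by simp, ?_, ?_, Or.inr (Or.inl ?_)⟩
      · intro c hc; cases hc; exact Finset.mem_sdiff.2 ⟨ha'X, ha'Y⟩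
      · intro c hc; cases hc
      · have hsub : move B b (some a') ⊆ move Y none (some a') := by
          show move B b (some a') ⊆ insert a' Y
          exact move_subset (hBY.trans (Finset.subset_insert _ _)) b (some a')
            (by intro c hc; cases hc; exact Finset.mem_insert_self _ _)
        rw [hYval]
        exact Or.inl (lt_of_lt_of_le hβ (hle1 _ _ hsub))
    · -- equality case
      have hmvA_ne : move A a b ≠ A :=
        move_ne hab (fun c hc => (haA c hc).1) (fun c hc => (hbB c hc).2)
      have hmvB_ne : move B b a ≠ B :=
        move_ne (Ne.symm hab) (fun c hc => (hbB c hc).1) (fun c hc => (haA c hc).2)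
      have hnsX : ¬ move A a b ⊆ X := fun hs =>
        hmvA_ne (hAuniq _ ⟨hs, fun W hW => (hAmax W hW).trans hA'.le⟩)
      have hnsY : ¬ move B b a ⊆ Y := fun hs =>
        hmvB_ne (hBuniq _ ⟨hs, fun W hW => (hBmax W hW).trans hB'.le⟩)
      obtain ⟨b', hb'eq, hb'X⟩ := hnotinX hnsX
      obtain ⟨a', ha'eq, ha'Y⟩ := hnotinY hnsY
      subst hb'eq; subst ha'eq
      have ha'A := haA a' rfl
      have hb'B := hbB b' rfl
      have ha'X : a' ∈ X := hAX ha'A.1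
      have hb'Y : b' ∈ Y := hBY hb'B.1
      refine ⟨some a', some b', hab, ?_, ?_, ?_⟩
      · intro c hc; cases hc; exact Finset.mem_sdiff.2 ⟨ha'X, ha'Y⟩
      · intro c hc; cases hc; exact Finset.mem_sdiff.2 ⟨hb'Y, hb'X⟩
      · have hsubX : move A (some a') (some b') ⊆ move X (some a') (some b') := by
          show insert b' (A.erase a') ⊆ insert b' (X.erase a')
          exact Finset.insert_subset_insert _ (Finset.erase_subset_erase _ hAX)
        have hsubY : move B (some b') (some a') ⊆ move Y (some b') (some a') := by
          show insert a' (B.erase b') ⊆ insert a' (Y.erase b')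
          exact Finset.insert_subset_insert _ (Finset.erase_subset_erase _ hBY)
        have hleX : u1 A ≤ (uhat (move X (some a') (some b'))).1 := by
          rw [hA']; exact hle1 _ _ hsubX
        rcases lt_or_eq_of_le hleX with hlt | heq
        · exact Or.inl (by rw [hXval]; exact Or.inl hlt)
        · have hleY : u1 B ≤ (uhat (move Y (some b') (some a'))).1 := by
            rw [hB']; exact hle1 _ _ hsubY
          rcases lt_or_eq_of_le hleY with hltY | heqY
          · exact Or.inr (Or.inl (by rw [hYval]; exact Or.inl hltY))
          · have hsdX : move X (some a') (some b') \ move A (some a') (some b')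
                = X \ A := insert_erase_sdiff a' b' ha'A.1 hb'X
            have hsdY : move Y (some b') (some a') \ move B (some b') (some a')
                = Y \ B := insert_erase_sdiff b' a' hb'B.1 ha'Y
            have hXeq : uhat X = uhat (move X (some a') (some b')) := by
              rw [key _ _ hsubX (hA'.symm.trans heq), hsdX, ← hA', hXval]
            have hYeq : uhat Y = uhat (move Y (some b') (some a')) := by
              rw [key _ _ hsubY (hB'.symm.trans heqY), hsdY, ← hB', hYval]
            exact Or.inr (Or.inr ⟨hXeq, hYeq⟩)

end OrdConc
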